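/- For fixed θ, τ ∈ ℝ, as ω varies over [-1,1], the odds ratio ψ(ω) = [1 - ω² F(θ-log(1-ω)) F(τ-log(1-ω))]/(1-ω) (with ψ(1) = 2 + e^{-θ} + e^{-τ} by continuous extension) takes values in the interval [(1 - F(θ-log2)F(τ-log2))/2, 2 + e^{-θ} + e^{-τ}], with the endpoints attained at ω = -1 and ω = 1 respectively. -/
import Mathlib

noncomputable def logisticF (u : ℝ) : ℝ := 1 / (1 + Real.exp (-u))

noncomputable def psiOR (θ τ ω : ℝ) : ℝ :=
  if ω = 1 then 2 + Real.exp (-θ) + Real.exp (-τ)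
  else (1 - ω ^ 2 * logisticF (θ - Real.log (1 - ω)) * logisticF (τ - Real.log (1 - ω)))
        / (1 - ω)

lemma logisticF_sub_log (x s : ℝ) (hs : 0 < s) :
    logisticF (x - Real.log s) = 1 / (1 + Real.exp (-x) * s) := by
  unfold logisticF
  rw [neg_sub, Real.exp_sub, Real.exp_log hs, Real.exp_neg]
  ring_nf

lemma bounds (a b t : ℝ) (ha : 0 < a) (hb : 0 < b) (ht0 : 0 < t) (ht2 : t ≤ 2) :
    (1 - 1/((1+2*a)*(1+2*b)))/2 ≤ (2+a+b+(a*b-1)*t)/((1+a*t)*(1+b*t)) ∧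
    (2+a+b+(a*b-1)*t)/((1+a*t)*(1+b*t)) ≤ 2+a+b := by
  have hd : 0 < (1+a*t)*(1+b*t) := by positivity
  have hd2 : 0 < (1+2*a)*(1+2*b) := by positivity
  constructor
  · rw [div_le_div_iff₀ (by norm_num) hd]
    have h1 : (1 - 1/((1+2*a)*(1+2*b))) = ((1+2*a)*(1+2*b) - 1)/((1+2*a)*(1+2*b)) := by
      field_simp
    rw [h1, div_mul_eq_mul_div, div_le_iff₀ hd2]
    nlinarith [mul_nonneg (mul_nonneg ht0.le (sub_nonneg.2 ht2)) (mul_pos ha hb).le,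
      mul_nonneg (mul_nonneg ht0.le (sub_nonneg.2 ht2)) ha.le,
      mul_nonneg (mul_nonneg ht0.le (sub_nonneg.2 ht2)) hb.le,
      mul_pos ha hb, sq_nonneg (t-2), sq_nonneg t,
      mul_nonneg (mul_nonneg (mul_nonneg ht0.le (sub_nonneg.2 ht2)) ha.le) hb.le,
      mul_nonneg (mul_nonneg (mul_nonneg (mul_nonneg ht0.le (sub_nonneg.2 ht2)) ha.le) hb.le) (mul_pos ha hb).le]
  · rw [div_le_iff₀ hd]
    nlinarith [mul_nonneg ht0.le (sq_nonneg (a+b)), mul_nonneg ht0.le (mul_pos ha hb).le,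
      mul_nonneg ht0.le ha.le, mul_nonneg ht0.le hb.le,
      mul_nonneg (sq_nonneg t) (mul_nonneg (mul_pos ha hb).le (by linarith : (0:ℝ) ≤ 2+a+b))]

theorem odds_ratio_range_over_omega (θ τ : ℝ) :
    (∀ ω ∈ Set.Icc (-1 : ℝ) 1,
      psiOR θ τ ω ∈ Set.Icc
        ((1 - logisticF (θ - Real.log 2) * logisticF (τ - Real.log 2)) / 2)
        (2 + Real.exp (-θ) + Real.exp (-τ))) ∧
    psiOR θ τ (-1) = (1 - logisticF (θ - Real.log 2) * logisticF (τ - Real.log 2)) / 2 ∧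
    psiOR θ τ 1 = 2 + Real.exp (-θ) + Real.exp (-τ) := by
  have ha : 0 < Real.exp (-θ) := Real.exp_pos _
  have hb : 0 < Real.exp (-τ) := Real.exp_pos _
  set a := Real.exp (-θ) with hadef
  set b := Real.exp (-τ) with hbdef
  have hF2θ : logisticF (θ - Real.log 2) = 1 / (1 + a * 2) := logisticF_sub_log θ 2 (by norm_num)
  have hF2τ : logisticF (τ - Real.log 2) = 1 / (1 + b * 2) := logisticF_sub_log τ 2 (by norm_num)
  have hlow : (1 - logisticF (θ - Real.log 2) * logisticF (τ - Real.log 2)) / 2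
      = (1 - 1/((1+2*a)*(1+2*b)))/2 := by
    rw [hF2θ, hF2τ]
    have h1 : (0:ℝ) < 1 + a * 2 := by positivity
    have h2 : (0:ℝ) < 1 + b * 2 := by positivity
    rw [div_eq_div_iff (by norm_num) (by norm_num)]
    field_simp
  refine ⟨?_, ?_, ?_⟩
  · intro ω hω
    obtain ⟨h1, h2⟩ := hω
    rcases eq_or_lt_of_le h2 with rfl | h2
    · rw [psiOR, if_pos rfl]
      constructor
      · rw [hlow]
        have : 0 < 1/((1+2*a)*(1+2*b)) := by positivity
        nlinarith
      · exact le_refl _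
    · have ht : 0 < 1 - ω := by linarith
      have ht2 : 1 - ω ≤ 2 := by linarith
      have key : psiOR θ τ ω = (2+a+b+(a*b-1)*(1-ω))/((1+a*(1-ω))*(1+b*(1-ω))) := by
        rw [psiOR, if_neg (by linarith)]
        rw [logisticF_sub_log θ _ ht, logisticF_sub_log τ _ ht]
        have h1 : (0:ℝ) < 1 + a * (1-ω) := by positivity
        have h2' : (0:ℝ) < 1 + b * (1-ω) := by positivity
        field_simp
        ring
      rw [key, hlow]
      exact ⟨(bounds a b (1-ω) ha hb ht ht2).1, (bounds a b (1-ω) ha hb ht ht2).2⟩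
  · rw [psiOR, if_neg (by norm_num)]
    norm_num
  · rw [psiOR, if_pos rfl]
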